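/- Equality of recovery thresholds for separable constellations (Lemma 9): under the separable structure, write ψ_ℂ(x) = Ψ(x, x) and ψ_ℝ(x) = Ψ^R(x, x). Then sup_{x>0} ψ_ℂ(x)/x = sup_{x>0} ψ_ℝ(x)/x (so the exact recovery thresholds of the complex constellation O and the real constellation R are equal), and if ψ_ℝ is differentiable on (0,∞) then ψ_ℂ is differentiable on (0,∞) with ψ_ℂ'(x) = ψ_ℝ'(x/2) for all x > 0, whence sup_{x>0} ψ_ℂ'(x) = sup_{x>0} ψ_ℝ'(x) (so the minimum recovery thresholds are equal as well). -/

import Mathlib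

open MeasureTheory Filter Topology
open scoped ENNReal NNReal

noncomputable def wC (O : Finset ℂ) (p : ℂ → ℝ) (z : ℂ) (τ : ℝ) (a : ℂ) : ℝ :=
  p a * Real.exp (-(‖z - a‖) ^ 2 / τ) /
    ∑ a' ∈ O, p a' * Real.exp (-(‖z - a'‖) ^ 2 / τ)

noncomputable def Fc (O : Finset ℂ) (p : ℂ → ℝ) (z : ℂ) (τ : ℝ) : ℂ :=
  ∑ a ∈ O, (wC O p z τ a : ℂ) * a

noncomputable def Gc (O : Finset ℂ) (p : ℂ → ℝ) (z : ℂ) (τ : ℝ) : ℝ :=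
  ∑ a ∈ O, wC O p z τ a * (‖a - Fc O p z τ‖) ^ 2

noncomputable def gaussC : Measure ℂ :=
  volume.withDensity fun z => ENNReal.ofReal ((1 / Real.pi) * Real.exp (-(‖z‖) ^ 2))

noncomputable def PsiC (O : Finset ℂ) (p : ℂ → ℝ) (v g : ℝ) : ℝ :=
  ∑ a ∈ O, p a * ∫ z, (‖Fc O p (a + (Real.sqrt v : ℂ) * z) g - a‖) ^ 2 ∂gaussC

noncomputable def PhiC (O : Finset ℂ) (p : ℂ → ℝ) (v g : ℝ) : ℝ :=
  ∑ a ∈ O, p a * ∫ z, Gc O p (a + (Real.sqrt v : ℂ) * z) g ∂gaussC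
noncomputable def wR (R : Finset ℝ) (q : ℝ → ℝ) (x τ a : ℝ) : ℝ :=
  q a * Real.exp (-(x - a) ^ 2 / (2 * τ)) /
    ∑ a' ∈ R, q a' * Real.exp (-(x - a') ^ 2 / (2 * τ))

noncomputable def FR (R : Finset ℝ) (q : ℝ → ℝ) (x τ : ℝ) : ℝ :=
  ∑ a ∈ R, wR R q x τ a * a

noncomputable def GR (R : Finset ℝ) (q : ℝ → ℝ) (x τ : ℝ) : ℝ :=
  ∑ a ∈ R, wR R q x τ a * (a - FR R q x τ) ^ 2

noncomputable def gaussR : Measure ℝ :=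
  volume.withDensity fun z => ENNReal.ofReal ((1 / Real.sqrt (2 * Real.pi)) * Real.exp (-z ^ 2 / 2))

noncomputable def PsiR (R : Finset ℝ) (q : ℝ → ℝ) (v g : ℝ) : ℝ :=
  ∑ a ∈ R, q a * ∫ z, (FR R q (a + Real.sqrt v * z) g - a) ^ 2 ∂gaussR

noncomputable def PhiR (R : Finset ℝ) (q : ℝ → ℝ) (v g : ℝ) : ℝ :=
  ∑ a ∈ R, q a * ∫ z, GR R q (a + Real.sqrt v * z) g ∂gaussR

section Aux
variable (R : Finset ℝ) (hR : R.Nonempty) (q : ℝ → ℝ) (hq : ∀ a ∈ R, 0 < q a)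
include hR hq

lemma denom_pos (x τ : ℝ) :
    0 < ∑ a' ∈ R, q a' * Real.exp (-(x - a') ^ 2 / (2 * τ)) :=
  Finset.sum_pos (fun a ha => mul_pos (hq a ha) (Real.exp_pos _)) hR

lemma wR_sum_eq_one (x τ : ℝ) : ∑ a ∈ R, wR R q x τ a = 1 := by
  unfold wR
  rw [← Finset.sum_div, div_self (denom_pos R hR q hq x τ).ne']

lemma wR_nonneg (x τ : ℝ) (a : ℝ) (ha : a ∈ R) : 0 ≤ wR R q x τ a :=
  div_nonneg (mul_nonneg (hq a ha).le (Real.exp_pos _).le) (denom_pos R hR q hq x τ).le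

lemma FR_abs_le (x τ : ℝ) : |FR R q x τ| ≤ ∑ a ∈ R, |a| := by
  unfold FR
  calc |∑ a ∈ R, wR R q x τ a * a| ≤ ∑ a ∈ R, |wR R q x τ a * a| :=
        Finset.abs_sum_le_sum_abs _ _
    _ ≤ ∑ a ∈ R, |a| := by
        apply Finset.sum_le_sum
        intro a ha
        rw [abs_mul]
        have h1 : |wR R q x τ a| ≤ 1 := by
          rw [abs_of_nonneg (wR_nonneg R hR q hq x τ a ha)]
          unfold wR
          rw [div_le_one (denom_pos R hR q hq x τ)]
          exact Finset.single_le_sum (f := fun a' => q a' * Real.exp (-(x - a') ^ 2 / (2 * τ)))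
            (fun b hb => mul_nonneg (hq b hb).le (Real.exp_pos _).le) ha
        calc |wR R q x τ a| * |a| ≤ 1 * |a| :=
              mul_le_mul_of_nonneg_right h1 (abs_nonneg _)
          _ = |a| := one_mul _

lemma FR_continuous (τ : ℝ) : Continuous (fun x => FR R q x τ) := by
  unfold FR wR
  apply continuous_finset_sum
  intro a _
  apply Continuous.mul _ continuous_const
  apply Continuous.div
  · fun_prop
  · fun_prop
  · intro x
    exact (denom_pos R hR q hq x τ).ne'

end Aux

lemma emb_inj : Function.Injective (fun ab : ℝ × ℝ => (ab.1 : ℂ) + (ab.2 : ℂ) * Complex.I) := by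
  intro ⟨a, b⟩ ⟨c, d⟩ h
  simp only at h
  have h1 : ((a : ℂ) + (b : ℂ) * Complex.I).re = ((c : ℂ) + (d : ℂ) * Complex.I).re := by rw [h]
  have h2 : ((a : ℂ) + (b : ℂ) * Complex.I).im = ((c : ℂ) + (d : ℂ) * Complex.I).im := by rw [h]
  simp at h1 h2
  simp [h1, h2]

section Fact
variable (R : Finset ℝ) (hR : R.Nonempty) (q : ℝ → ℝ) (hq : ∀ a ∈ R, 0 < q a)
    (O : Finset ℂ)
    (hO : O = (R ×ˢ R).image fun ab : ℝ × ℝ => (ab.1 : ℂ) + (ab.2 : ℂ) * Complex.I)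
    (p : ℂ → ℝ)
    (hp : ∀ a ∈ R, ∀ b ∈ R, p ((a : ℂ) + (b : ℂ) * Complex.I) = q a * q b)

include hO in
lemma sum_O {M : Type*} [AddCommMonoid M] (f : ℂ → M) :
    ∑ α ∈ O, f α = ∑ a ∈ R, ∑ b ∈ R, f ((a : ℂ) + (b : ℂ) * Complex.I) := by
  rw [hO, Finset.sum_image (fun x _ y _ h => emb_inj h), Finset.sum_product]

include hp in
lemma exp_factor (z : ℂ) (τ : ℝ) (a : ℝ) (ha : a ∈ R) (b : ℝ) (hb : b ∈ R) :
    p ((a : ℂ) + (b : ℂ) * Complex.I) *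
      Real.exp (-(‖z - ((a : ℂ) + (b : ℂ) * Complex.I)‖) ^ 2 / τ) =
    (q a * Real.exp (-(z.re - a) ^ 2 / (2 * (τ / 2)))) *
      (q b * Real.exp (-(z.im - b) ^ 2 / (2 * (τ / 2)))) := by
  rw [hp a ha b hb]
  have habs : (‖z - ((a : ℂ) + (b : ℂ) * Complex.I)‖) ^ 2
      = (z.re - a) ^ 2 + (z.im - b) ^ 2 := by
    rw [Complex.sq_norm, Complex.normSq_apply]
    simp
    ring
  rw [habs]
  have : -((z.re - a) ^ 2 + (z.im - b) ^ 2) / τ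
      = -(z.re - a) ^ 2 / (2 * (τ / 2)) + -(z.im - b) ^ 2 / (2 * (τ / 2)) := by
    ring
  rw [this, Real.exp_add]
  ring

include hR hq hO hp in
lemma wC_factor (z : ℂ) (τ : ℝ) (a : ℝ) (ha : a ∈ R) (b : ℝ) (hb : b ∈ R) :
    wC O p z τ ((a : ℂ) + (b : ℂ) * Complex.I)
      = wR R q z.re (τ / 2) a * wR R q z.im (τ / 2) b := by
  unfold wC wR
  rw [sum_O R O hO, exp_factor R q p hp z τ a ha b hb]
  have hd : ∑ a' ∈ R, ∑ b' ∈ R,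
      (p ((a' : ℂ) + (b' : ℂ) * Complex.I) *
        Real.exp (-(‖z - ((a' : ℂ) + (b' : ℂ) * Complex.I)‖) ^ 2 / τ))
      = (∑ a' ∈ R, q a' * Real.exp (-(z.re - a') ^ 2 / (2 * (τ / 2)))) *
        (∑ b' ∈ R, q b' * Real.exp (-(z.im - b') ^ 2 / (2 * (τ / 2)))) := by
    rw [Finset.sum_mul_sum]
    exact Finset.sum_congr rfl fun a' ha' => Finset.sum_congr rfl fun b' hb' =>
      exp_factor R q p hp z τ a' ha' b' hb'
  rw [hd, div_mul_div_comm]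

include hR hq hO hp in
lemma Fc_eq (z : ℂ) (τ : ℝ) :
    Fc O p z τ = (FR R q z.re (τ / 2) : ℂ) + (FR R q z.im (τ / 2) : ℂ) * Complex.I := by
  unfold Fc
  rw [sum_O R O hO]
  have : ∀ a ∈ R, ∀ b ∈ R,
      (wC O p z τ ((a : ℂ) + (b : ℂ) * Complex.I) : ℂ) * ((a : ℂ) + (b : ℂ) * Complex.I)
      = ((wR R q z.re (τ / 2) a : ℂ) * (wR R q z.im (τ / 2) b : ℂ)) *
          ((a : ℂ) + (b : ℂ) * Complex.I) := by
    intro a ha b hb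
    rw [wC_factor R hR q hq O hO p hp z τ a ha b hb]
    push_cast
    ring
  rw [Finset.sum_congr rfl fun a ha => Finset.sum_congr rfl fun b hb => this a ha b hb]
  have hsum1 : ∑ b ∈ R, ((wR R q z.im (τ / 2) b : ℂ)) = 1 := by
    rw [← Complex.ofReal_sum, wR_sum_eq_one R hR q hq, Complex.ofReal_one]
  have hsum2 : ∑ a ∈ R, ((wR R q z.re (τ / 2) a : ℂ)) = 1 := by
    rw [← Complex.ofReal_sum, wR_sum_eq_one R hR q hq, Complex.ofReal_one]
  have expand : ∀ a b : ℝ,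
      ((wR R q z.re (τ / 2) a : ℂ) * (wR R q z.im (τ / 2) b : ℂ)) *
          ((a : ℂ) + (b : ℂ) * Complex.I)
      = ((wR R q z.re (τ / 2) a : ℂ) * (a : ℂ)) * (wR R q z.im (τ / 2) b : ℂ)
        + (wR R q z.re (τ / 2) a : ℂ) * (((wR R q z.im (τ / 2) b : ℂ) * (b : ℂ)) * Complex.I) := by
    intro a b; ring
  simp_rw [expand, Finset.sum_add_distrib]
  rw [← Finset.sum_mul_sum, ← Finset.sum_mul_sum, hsum1, hsum2]
  have hFre : (FR R q z.re (τ / 2) : ℂ) = ∑ a ∈ R, (wR R q z.re (τ / 2) a : ℂ) * (a : ℂ) := by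
    unfold FR; push_cast; rfl
  have hFim : (FR R q z.im (τ / 2) : ℂ) = ∑ b ∈ R, (wR R q z.im (τ / 2) b : ℂ) * (b : ℂ) := by
    unfold FR; push_cast; rfl
  rw [hFre, hFim]
  simp_rw [Finset.sum_mul]
  ring_nf
  congr 1
  exact Finset.sum_congr rfl fun x _ => by ring
end Fact

section Meas

lemma integral_gaussR_eq (h : ℝ → ℝ) :
    ∫ x, h x ∂gaussR
      = ∫ x, ((1 / Real.sqrt (2 * Real.pi)) * Real.exp (-x ^ 2 / 2)) * h x := by
  have hcont : Continuous fun x : ℝ => (1 / Real.sqrt (2 * Real.pi)) * Real.exp (-x ^ 2 / 2) := by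
    continuity
  have hm : Measurable fun x : ℝ =>
      ((1 / Real.sqrt (2 * Real.pi)) * Real.exp (-x ^ 2 / 2)).toNNReal :=
    hcont.measurable.real_toNNReal
  have : gaussR = volume.withDensity fun x =>
      (((1 / Real.sqrt (2 * Real.pi)) * Real.exp (-x ^ 2 / 2)).toNNReal : ℝ≥0∞) := rfl
  rw [this, integral_withDensity_eq_integral_smul hm]
  apply integral_congr_ae
  filter_upwards with x
  rw [NNReal.smul_def, Real.coe_toNNReal _ (by positivity), smul_eq_mul]

lemma integral_gaussC_eq (h : ℂ → ℝ) :
    ∫ z, h z ∂gaussC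
      = ∫ z, ((1 / Real.pi) * Real.exp (-(‖z‖) ^ 2)) * h z := by
  have hcont : Continuous fun z : ℂ => (1 / Real.pi) * Real.exp (-(‖z‖) ^ 2) := by
    continuity
  have hm : Measurable fun z : ℂ =>
      ((1 / Real.pi) * Real.exp (-(‖z‖) ^ 2)).toNNReal :=
    hcont.measurable.real_toNNReal
  have : gaussC = volume.withDensity fun z =>
      (((1 / Real.pi) * Real.exp (-(‖z‖) ^ 2)).toNNReal : ℝ≥0∞) := rfl
  rw [this, integral_withDensity_eq_integral_smul hm]
  apply integral_congr_ae
  filter_upwards with z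
  rw [NNReal.smul_def, Real.coe_toNNReal _ (by positivity), smul_eq_mul]

lemma integral_gaussC_split (h₁ h₂ : ℝ → ℝ) (hc₁ : Continuous h₁) (hc₂ : Continuous h₂)
    (C : ℝ) (hb₁ : ∀ x, |h₁ x| ≤ C) (hb₂ : ∀ x, |h₂ x| ≤ C) :
    ∫ z, (h₁ z.re + h₂ z.im) ∂gaussC
      = (∫ x, h₁ (x / Real.sqrt 2) ∂gaussR) + ∫ x, h₂ (x / Real.sqrt 2) ∂gaussR := by
  set ψ : ℝ → ℝ := fun t => (1 / Real.sqrt Real.pi) * Real.exp (-t ^ 2) with hψ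
  have hψ_int : Integrable ψ := by
    apply Integrable.const_mul
    have := integrable_exp_neg_mul_sq (b := 1) one_pos
    simpa using this
  have hψ_tot : ∫ t, ψ t = 1 := by
    rw [hψ]
    simp only
    rw [integral_const_mul]
    have h1 : ∫ t : ℝ, Real.exp (-t ^ 2) = Real.sqrt Real.pi := by
      have := integral_gaussian (1 : ℝ)
      simpa using this
    rw [h1]
    rw [one_div, inv_mul_cancel₀]
    positivity
  have key : ∀ (h : ℝ → ℝ), Continuous h → (∀ x, |h x| ≤ C) →
      (∫ x, ψ x * h x) = ∫ x, h (x / Real.sqrt 2) ∂gaussR := by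
    intro h hc hb
    rw [integral_gaussR_eq]
    have hs2 : (0:ℝ) < Real.sqrt 2 := by positivity
    have : ∀ x : ℝ, ((1 / Real.sqrt (2 * Real.pi)) * Real.exp (-x ^ 2 / 2)) * h (x / Real.sqrt 2)
        = (Real.sqrt 2)⁻¹ * ((fun t => ψ t * h t) (x / Real.sqrt 2)) := by
      intro x
      simp only [hψ]
      have e1 : Real.exp (-(x / Real.sqrt 2) ^ 2) = Real.exp (-x ^ 2 / 2) := by
        congr 1
        rw [div_pow, Real.sq_sqrt (by norm_num : (0:ℝ) ≤ 2)]
        ring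
      rw [e1]
      have e2 : (1 / Real.sqrt (2 * Real.pi)) = (Real.sqrt 2)⁻¹ * (1 / Real.sqrt Real.pi) := by
        rw [Real.sqrt_mul (by norm_num : (0:ℝ) ≤ 2)]
        field_simp
      rw [e2]
      ring
    rw [integral_congr_ae (Eventually.of_forall this), integral_const_mul,
      Measure.integral_comp_div (fun t => ψ t * h t) (Real.sqrt 2),
      abs_of_pos hs2, smul_eq_mul, ← mul_assoc, inv_mul_cancel₀ hs2.ne', one_mul]
  rw [← key h₁ hc₁ hb₁, ← key h₂ hc₂ hb₂]
  rw [integral_gaussC_eq]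
  have hpoint : ∀ z : ℂ, ((1 / Real.pi) * Real.exp (-(‖z‖) ^ 2)) * (h₁ z.re + h₂ z.im)
      = (ψ z.re * h₁ z.re) * ψ z.im + ψ z.re * (ψ z.im * h₂ z.im) := by
    intro z
    have habs : (‖z‖) ^ 2 = z.re ^ 2 + z.im ^ 2 := by
      rw [Complex.sq_norm, Complex.normSq_apply]; ring
    have hexp : Real.exp (-(z.re ^ 2 + z.im ^ 2)) = Real.exp (-z.re ^ 2) * Real.exp (-z.im ^ 2) := by
      rw [← Real.exp_add]; ring_nf
    have hpi : (1 / Real.pi) = (1 / Real.sqrt Real.pi) * (1 / Real.sqrt Real.pi) := by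
      rw [div_mul_div_comm, one_mul, Real.mul_self_sqrt Real.pi_pos.le]
    rw [habs, hexp, hpi, hψ]
    simp only
    ring
  rw [integral_congr_ae (Eventually.of_forall hpoint)]
  -- move to ℝ × ℝ
  have hmp := Complex.volume_preserving_equiv_real_prod.symm
  rw [← hmp.integral_comp (MeasurableEquiv.measurableEmbedding _)
    (fun z : ℂ => (ψ z.re * h₁ z.re) * ψ z.im + ψ z.re * (ψ z.im * h₂ z.im))]
  have hsimp : ∀ pr : ℝ × ℝ,
      (fun z : ℂ => (ψ z.re * h₁ z.re) * ψ z.im + ψ z.re * (ψ z.im * h₂ z.im))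
        (Complex.measurableEquivRealProd.symm pr)
      = (ψ pr.1 * h₁ pr.1) * ψ pr.2 + ψ pr.1 * (ψ pr.2 * h₂ pr.2) := by
    intro pr
    rw [Complex.measurableEquivRealProd_symm_apply]
  rw [integral_congr_ae (Eventually.of_forall hsimp)]
  rw [Measure.volume_eq_prod]
  have hg1 : Integrable (fun y => ψ y * h₁ y) := by
    have := hψ_int.bdd_mul (hc₁.aestronglyMeasurable) (Eventually.of_forall fun x => by
      rw [Real.norm_eq_abs]; exact hb₁ x)
    simpa [mul_comm] using this
  have hg2 : Integrable (fun y => ψ y * h₂ y) := by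
    have := hψ_int.bdd_mul (hc₂.aestronglyMeasurable) (Eventually.of_forall fun x => by
      rw [Real.norm_eq_abs]; exact hb₂ x)
    simpa [mul_comm] using this
  have hint1 : Integrable (fun pr : ℝ × ℝ => (ψ pr.1 * h₁ pr.1) * ψ pr.2)
      ((volume : Measure ℝ).prod volume) := hg1.mul_prod hψ_int
  have hint2 : Integrable (fun pr : ℝ × ℝ => ψ pr.1 * (ψ pr.2 * h₂ pr.2))
      ((volume : Measure ℝ).prod volume) := hψ_int.mul_prod hg2
  rw [integral_add hint1 hint2,
    integral_prod_mul (f := fun x => ψ x * h₁ x) (g := ψ),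
    integral_prod_mul (f := ψ) (g := fun x => ψ x * h₂ x), hψ_tot, mul_one, one_mul]

end Meas

section Main
variable (R : Finset ℝ) (hR : R.Nonempty) (q : ℝ → ℝ) (hq : ∀ a ∈ R, 0 < q a)
    (hqsum : ∑ a ∈ R, q a = 1)
    (O : Finset ℂ)
    (hO : O = (R ×ˢ R).image fun ab : ℝ × ℝ => (ab.1 : ℂ) + (ab.2 : ℂ) * Complex.I)
    (p : ℂ → ℝ)
    (hp : ∀ a ∈ R, ∀ b ∈ R, p ((a : ℂ) + (b : ℂ) * Complex.I) = q a * q b)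

include hR hq hqsum hO hp in
lemma PsiC_eq (v g : ℝ) (hv : 0 ≤ v) : PsiC O p v g = 2 * PsiR R q (v / 2) (g / 2) := by
  set B : ℝ := ∑ r ∈ R, |r| with hB
  set Ia : ℝ → ℝ := fun a => ∫ x, (FR R q (a + Real.sqrt (v / 2) * x) (g / 2) - a) ^ 2 ∂gaussR
    with hIa
  have habs : ∀ u w : ℝ, (‖(u : ℂ) + (w : ℂ) * Complex.I‖) ^ 2 = u ^ 2 + w ^ 2 := by
    intro u w
    rw [Complex.sq_norm, Complex.normSq_apply]
    simp
    ring
  have hcont : ∀ c : ℝ, Continuous fun t : ℝ => (FR R q (c + Real.sqrt v * t) (g / 2) - c) ^ 2 := by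
    intro c
    exact (((FR_continuous R hR q hq (g / 2)).comp
      (continuous_const.add (continuous_const.mul continuous_id))).sub continuous_const).pow 2
  have hbd : ∀ c d : ℝ, ∀ t : ℝ,
      |(FR R q (c + Real.sqrt v * t) (g / 2) - c) ^ 2| ≤ (B + |c| + |d|) ^ 2 := by
    intro c d t
    rw [abs_pow]
    have h1 : |FR R q (c + Real.sqrt v * t) (g / 2) - c| ≤ B + |c| + |d| := by
      calc |FR R q (c + Real.sqrt v * t) (g / 2) - c|
          ≤ |FR R q (c + Real.sqrt v * t) (g / 2)| + |c| := abs_sub _ _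
        _ ≤ B + |c| := by
            have := FR_abs_le R hR q hq (c + Real.sqrt v * t) (g / 2)
            linarith
        _ ≤ B + |c| + |d| := by linarith [abs_nonneg d]
    exact pow_le_pow_left₀ (abs_nonneg _) h1 2
  have term : ∀ a ∈ R, ∀ b ∈ R,
      (∫ z, (‖Fc O p (((a : ℂ) + (b : ℂ) * Complex.I) + (Real.sqrt v : ℂ) * z) g
        - ((a : ℂ) + (b : ℂ) * Complex.I)‖) ^ 2 ∂gaussC) = Ia a + Ia b := by
    intro a ha b hb
    have hpt : ∀ z : ℂ,
        (‖Fc O p (((a : ℂ) + (b : ℂ) * Complex.I) + (Real.sqrt v : ℂ) * z) g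
          - ((a : ℂ) + (b : ℂ) * Complex.I)‖) ^ 2
        = (fun t => (FR R q (a + Real.sqrt v * t) (g / 2) - a) ^ 2) z.re
          + (fun t => (FR R q (b + Real.sqrt v * t) (g / 2) - b) ^ 2) z.im := by
      intro z
      rw [Fc_eq R hR q hq O hO p hp]
      have hre : ((((a : ℂ) + (b : ℂ) * Complex.I) + ((Real.sqrt v : ℝ) : ℂ) * z)).re
          = a + Real.sqrt v * z.re := by simp
      have him : ((((a : ℂ) + (b : ℂ) * Complex.I) + ((Real.sqrt v : ℝ) : ℂ) * z)).im
          = b + Real.sqrt v * z.im := by simp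
      rw [hre, him]
      have hsub : ((FR R q (a + Real.sqrt v * z.re) (g / 2) : ℝ) : ℂ)
            + ((FR R q (b + Real.sqrt v * z.im) (g / 2) : ℝ) : ℂ) * Complex.I
            - ((a : ℂ) + (b : ℂ) * Complex.I)
          = ((FR R q (a + Real.sqrt v * z.re) (g / 2) - a : ℝ) : ℂ)
            + ((FR R q (b + Real.sqrt v * z.im) (g / 2) - b : ℝ) : ℂ) * Complex.I := by
        push_cast
        ring
      rw [hsub, habs]
    rw [integral_congr_ae (Eventually.of_forall hpt),
      integral_gaussC_split _ _ (hcont a) (hcont b) ((B + |a| + |b|) ^ 2)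
        (hbd a b) (fun t => by simpa [add_right_comm] using hbd b a t)]
    have hdiv : ∀ x : ℝ, Real.sqrt v * (x / Real.sqrt 2) = Real.sqrt (v / 2) * x := by
      intro x
      rw [Real.sqrt_div hv 2]
      field_simp
    congr 1
    · apply integral_congr_ae (Eventually.of_forall fun x => ?_)
      simp only [hdiv]
    · apply integral_congr_ae (Eventually.of_forall fun x => ?_)
      simp only [hdiv]
  unfold PsiC
  rw [sum_O R O hO]
  rw [Finset.sum_congr rfl fun a ha => Finset.sum_congr rfl fun b hb => by
    rw [term a ha b hb, hp a ha b hb]]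
  have step : ∀ a b : ℝ, (q a * q b) * (Ia a + Ia b)
      = (q a * Ia a) * q b + q a * (q b * Ia b) := by
    intro a b
    ring
  simp_rw [step, Finset.sum_add_distrib]
  rw [← Finset.sum_mul_sum, ← Finset.sum_mul_sum, hqsum, mul_one, one_mul]
  unfold PsiR
  rw [hIa]
  ring

end Main

/-- Lemma 9 (equality of recovery thresholds for separable constellations): with
`ψ_ℂ(x) = Ψ(x,x)` and `ψ_ℝ(x) = Ψ^R(x,x)`, the suprema of `ψ(x)/x` over `x > 0` agree (equal
ERTs), and if `ψ_ℝ` is differentiable on `(0,∞)` then so is `ψ_ℂ`, with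
`ψ_ℂ'(x) = ψ_ℝ'(x/2)`, whence the suprema of the derivatives agree (equal MRTs). -/
theorem lama_separable_thresholds_equal
    (R : Finset ℝ) (hR : R.Nonempty) (q : ℝ → ℝ)
    (hq : ∀ a ∈ R, 0 < q a) (hqsum : ∑ a ∈ R, q a = 1)
    (O : Finset ℂ)
    (hO : O = (R ×ˢ R).image fun ab : ℝ × ℝ => (ab.1 : ℂ) + (ab.2 : ℂ) * Complex.I)
    (p : ℂ → ℝ)
    (hp : ∀ a ∈ R, ∀ b ∈ R, p ((a : ℂ) + (b : ℂ) * Complex.I) = q a * q b) :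
    ((⨆ x : Set.Ioi (0 : ℝ), ENNReal.ofReal (PsiC O p (x : ℝ) (x : ℝ) / (x : ℝ))) =
      ⨆ x : Set.Ioi (0 : ℝ), ENNReal.ofReal (PsiR R q (x : ℝ) (x : ℝ) / (x : ℝ))) ∧
    ((∀ x : ℝ, 0 < x → DifferentiableAt ℝ (fun v : ℝ => PsiR R q v v) x) →
      (∀ x : ℝ, 0 < x →
        DifferentiableAt ℝ (fun v : ℝ => PsiC O p v v) x ∧
        deriv (fun v : ℝ => PsiC O p v v) x = deriv (fun v : ℝ => PsiR R q v v) (x / 2)) ∧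
      (⨆ x : Set.Ioi (0 : ℝ), ENNReal.ofReal (deriv (fun v : ℝ => PsiC O p v v) (x : ℝ))) =
        ⨆ x : Set.Ioi (0 : ℝ), ENNReal.ofReal (deriv (fun v : ℝ => PsiR R q v v) (x : ℝ))) := by
  have hkey : ∀ x : ℝ, 0 ≤ x → PsiC O p x x = 2 * PsiR R q (x / 2) (x / 2) := fun x hx =>
    PsiC_eq R hR q hq hqsum O hO p hp x x hx
  constructor
  · -- part 1
    apply le_antisymm
    · apply iSup_le
      rintro ⟨x, hx⟩
      simp only
      have hx' : (0:ℝ) < x := hx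
      have : PsiC O p x x / x = PsiR R q (x / 2) (x / 2) / (x / 2) := by
        rw [hkey x hx'.le]
        field_simp
      rw [this]
      exact le_iSup (fun y : Set.Ioi (0:ℝ) =>
        ENNReal.ofReal (PsiR R q (y : ℝ) (y : ℝ) / (y : ℝ))) ⟨x / 2, half_pos hx'⟩
    · apply iSup_le
      rintro ⟨y, hy⟩
      simp only
      have hy' : (0:ℝ) < y := hy
      have : PsiR R q y y / y = PsiC O p (2 * y) (2 * y) / (2 * y) := by
        rw [hkey (2 * y) (by linarith)]
        have : 2 * y / 2 = y := by ring
        rw [this]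
        field_simp
      rw [this]
      exact le_iSup (fun x : Set.Ioi (0:ℝ) =>
        ENNReal.ofReal (PsiC O p (x : ℝ) (x : ℝ) / (x : ℝ))) ⟨2 * y, Set.mem_Ioi.mpr (by linarith)⟩
        |>.trans_eq rfl
  · -- part 2
    intro hdiff
    have hmain : ∀ x : ℝ, 0 < x →
        HasDerivAt (fun v : ℝ => PsiC O p v v)
          (deriv (fun v : ℝ => PsiR R q v v) (x / 2)) x := by
      intro x hx
      set d := deriv (fun v : ℝ => PsiR R q v v) (x / 2) with hd
      have hRd : HasDerivAt (fun v : ℝ => PsiR R q v v) d (x / 2) :=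
        (hdiff (x / 2) (half_pos hx)).hasDerivAt
      have hhalf : HasDerivAt (fun v : ℝ => v / 2) (1 / 2) x := by
        simpa using (hasDerivAt_id x).div_const 2
      have hcomp : HasDerivAt (fun v : ℝ => PsiR R q (v / 2) (v / 2)) (d * (1 / 2)) x :=
        HasDerivAt.comp (h₂ := fun v : ℝ => PsiR R q v v) x hRd hhalf
      have hg : HasDerivAt (fun v : ℝ => 2 * PsiR R q (v / 2) (v / 2)) d x := by
        have := hcomp.const_mul (2 : ℝ)
        rw [show (2 : ℝ) * (d * (1 / 2)) = d by ring] at this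
        exact this
      have hev : (fun v : ℝ => PsiC O p v v) =ᶠ[nhds x]
          (fun v : ℝ => 2 * PsiR R q (v / 2) (v / 2)) := by
        filter_upwards [isOpen_Ioi.mem_nhds (show x ∈ Set.Ioi (0:ℝ) from hx)] with y hy
        exact hkey y (le_of_lt hy)
      exact hg.congr_of_eventuallyEq hev
    refine ⟨fun x hx => ⟨(hmain x hx).differentiableAt, (hmain x hx).deriv⟩, ?_⟩
    have hder : ∀ x : ℝ, 0 < x → deriv (fun v : ℝ => PsiC O p v v) x
        = deriv (fun v : ℝ => PsiR R q v v) (x / 2) := fun x hx => (hmain x hx).deriv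
    apply le_antisymm
    · apply iSup_le
      rintro ⟨x, hx⟩
      have hx' : (0:ℝ) < x := hx
      simp only
      rw [hder x hx']
      exact le_iSup (fun y : Set.Ioi (0:ℝ) =>
        ENNReal.ofReal (deriv (fun v : ℝ => PsiR R q v v) (y : ℝ))) ⟨x / 2, half_pos hx'⟩
    · apply iSup_le
      rintro ⟨y, hy⟩
      have hy' : (0:ℝ) < y := hy
      simp only
      have h2y : deriv (fun v : ℝ => PsiC O p v v) (2 * y)
          = deriv (fun v : ℝ => PsiR R q v v) y := by
        rw [hder (2 * y) (by linarith)]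
        norm_num
      rw [← h2y]
      exact le_iSup (fun x : Set.Ioi (0:ℝ) =>
        ENNReal.ofReal (deriv (fun v : ℝ => PsiC O p v v) (x : ℝ))) ⟨2 * y, Set.mem_Ioi.mpr (by linarith)⟩
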